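/- arXiv:2211.03685 — 9 statements merged into one kernel-verified Lean document; each statement's English description precedes it below -/
import Mathlib

section
/- In a finite ordinal potential game, every maximizer of the potential function over the configuration space is a recursive configuration. -/
open Function

variable {ι : Type*} [Fintype ι] [DecidableEq ι] {A : ι → Type*} [∀ i, Fintype (A i)]

/-- `a` is a best response action of player `i` to the profile `x₋ᵢ`. -/
def IsBR (u : ι → (∀ i, A i) → ℝ) (i : ι) (x : ∀ i, A i) (a : A i) : Prop :=
  ∀ b : A i, u i (update x i b) ≤ u i (update x i a)

/-- One step of the best response dynamics: a single player switches to a best response. -/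
def BRStep (u : ι → (∀ i, A i) → ℝ) (x y : ∀ i, A i) : Prop :=
  x ≠ y ∧ ∃ i, IsBR u i x (y i) ∧ ∀ j, j ≠ i → y j = x j

/-- A best response path from `x` to `y`. -/
def BRPath (u : ι → (∀ i, A i) → ℝ) : (∀ i, A i) → (∀ i, A i) → Prop :=
  Relation.ReflTransGen (BRStep u)

/-- A configuration is recursive if every configuration reachable from it by a
best response path can reach it back by a best response path. -/
def Recursive (u : ι → (∀ i, A i) → ℝ) (x : ∀ i, A i) : Prop :=
  ∀ y, BRPath u x y → BRPath u y x

/-- `Ψ` is an ordinal potential for the game with utilities `u`. -/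
def OrdinalPotential (u : ι → (∀ i, A i) → ℝ) (Ψ : (∀ i, A i) → ℝ) : Prop :=
  ∀ i (x y : ∀ i, A i), (∀ j, j ≠ i → x j = y j) → (u i x < u i y ↔ Ψ x < Ψ y)

/-!
An ordinal potential never decreases along a best response step. Hence a step out of a
maximizer `x` of the potential leads to another maximizer `y`, and the moving player is
indifferent between `y` and `x`; so her old action is again a best response at `y` and
the step can be undone. Along any best response path from `x` we thus stay among
maximizers and can walk back step by step.
-/

section

variable {ι : Type*} {A : ι → Type*} {u : ι → (∀ i, A i) → ℝ} {Ψ : (∀ i, A i) → ℝ}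
  {i : ι} {x y : ∀ i, A i} {a b : A i}

theorem OrdinalPotential.utility_le_iff (hΨ : OrdinalPotential u Ψ)
    (hxy : ∀ j, j ≠ i → x j = y j) : u i x ≤ u i y ↔ Ψ x ≤ Ψ y := by
  simpa only [not_lt] using (hΨ i y x fun j hj => (hxy j hj).symm).not

variable [DecidableEq ι]

theorem IsBR.le_update (h : IsBR u i x a) : u i x ≤ u i (update x i a) := by
  simpa only [update_eq_self] using h (x i)

theorem IsBR.of_le (h : IsBR u i x a) (hab : u i (update x i a) ≤ u i (update x i b)) :
    IsBR u i x b :=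
  fun c => (h c).trans hab

theorem isBR_update_iff : IsBR u i (update x i a) b ↔ IsBR u i x b := by
  simp only [IsBR, update_idem]

theorem BRStep.eq_update (h : BRStep u x y) :
    ∃ i, IsBR u i x (y i) ∧ y = update x i (y i) := by
  obtain ⟨-, i, hbr, hoff⟩ := h
  exact ⟨i, hbr, eq_update_iff.2 ⟨rfl, hoff⟩⟩

theorem OrdinalPotential.le_of_brStep (hΨ : OrdinalPotential u Ψ) (h : BRStep u x y) :
    Ψ x ≤ Ψ y := by
  obtain ⟨i, hbr, hy⟩ := h.eq_update
  rw [hy]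
  exact (hΨ.utility_le_iff fun j hj => (update_of_ne hj _ x).symm).1 hbr.le_update

theorem OrdinalPotential.brStep_symm_of_forall_le (hΨ : OrdinalPotential u Ψ)
    (hx : ∀ z, Ψ z ≤ Ψ x) (h : BRStep u x y) : BRStep u y x := by
  obtain ⟨hne, i, hbr, hoff⟩ := h
  have hy : y = update x i (y i) := eq_update_iff.2 ⟨rfl, hoff⟩
  have hyx : u i y ≤ u i x := (hΨ.utility_le_iff hoff).2 (hx y)
  have hstay : IsBR u i x (x i) := hbr.of_le (by rwa [update_eq_self, ← hy])
  refine ⟨hne.symm, i, ?_, fun j hj => (hoff j hj).symm⟩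
  rwa [hy, isBR_update_iff]

end

/-- In a finite ordinal potential game, every maximizer of the potential function
over the configuration space is recursive. -/
theorem potential_maximizer_is_recursive (u : ι → (∀ i, A i) → ℝ) (Ψ : (∀ i, A i) → ℝ)
    (hΨ : OrdinalPotential u Ψ) (x : ∀ i, A i)
    (hmax : ∀ y : ∀ i, A i, Ψ y ≤ Ψ x) :
    Recursive u x := by
  intro y hy
  suffices h : (∀ z, Ψ z ≤ Ψ y) ∧ BRPath u y x from h.2
  induction hy with
  | refl => exact ⟨hmax, .refl⟩
  | tail _ hstep ih =>
    exact ⟨fun z => (ih.1 z).trans (hΨ.le_of_brStep hstep),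
      .head (hΨ.brStep_symm_of_forall_le ih.1 hstep) ih.2⟩
end

section
/- In a finite ordinal potential game, every recursive configuration is a Nash equilibrium. -/
open Function

variable {ι : Type*} [Fintype ι] [DecidableEq ι] {A : ι → Type*} [∀ i, Fintype (A i)]

/-! Best response steps never decrease an ordinal potential, whereas a player who is not best
responding can switch to a best response and strictly increase it. From a recursive
configuration such a step would have to be undone by a path along which the potential does not
decrease, which is impossible. -/

section

-- Rebinding `ι` and `A` keeps the outer `Fintype` instances out of these lemmas.
variable {ι : Type*} [DecidableEq ι] {A : ι → Type*} {u : ι → (∀ i, A i) → ℝ}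
  {Ψ : (∀ i, A i) → ℝ} {x y : ∀ i, A i}

theorem exists_isBR (i : ι) (x : ∀ i, A i) [Finite (A i)] :
    ∃ a, IsBR u i x a :=
  have : Nonempty (A i) := ⟨x i⟩
  Finite.exists_max fun b => u i (update x i b)

namespace OrdinalPotential

theorem le_of_brStep_s2 (hΨ : OrdinalPotential u Ψ) (h : BRStep u x y) : Ψ x ≤ Ψ y := by
  obtain ⟨-, i, hbr, hy⟩ := h
  have hy_eq : y = update x i (y i) := eq_update_iff.mpr ⟨rfl, hy⟩
  have hu : u i x ≤ u i y := by simpa only [update_eq_self, ← hy_eq] using hbr (x i)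
  exact not_lt.mp fun hlt => hu.not_gt ((hΨ i y x hy).mpr hlt)

theorem le_of_brPath (hΨ : OrdinalPotential u Ψ) (h : BRPath u x y) : Ψ x ≤ Ψ y := by
  induction h with
  | refl => exact le_rfl
  | tail _ hstep ih => exact ih.trans (hΨ.le_of_brStep_s2 hstep)

theorem exists_brStep_lt {i : ι} [Finite (A i)] (hΨ : OrdinalPotential u Ψ)
    (hx : ¬ IsBR u i x (x i)) : ∃ y, BRStep u x y ∧ Ψ x < Ψ y := by
  obtain ⟨a, ha⟩ := exists_isBR (u := u) i x
  obtain ⟨b, hb⟩ : ∃ b, u i x < u i (update x i b) := by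
    simpa only [IsBR, update_eq_self, not_forall, not_le] using hx
  have hlt : u i x < u i (update x i a) := hb.trans_le (ha b)
  have hfix : ∀ j, j ≠ i → update x i a j = x j := fun j hj => update_of_ne hj a x
  refine ⟨update x i a, ⟨fun h => hlt.ne (congrArg (u i) h), i, ?_, hfix⟩,
    (hΨ i x _ fun j hj => (hfix j hj).symm).mp hlt⟩
  rwa [update_self]

end OrdinalPotential

end

/-- In a finite ordinal potential game, every recursive configuration is a Nash
equilibrium: each player's current action is a best response. -/
theorem recursive_is_nash (u : ι → (∀ i, A i) → ℝ) (Ψ : (∀ i, A i) → ℝ)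
    (hΨ : OrdinalPotential u Ψ) (x : ∀ i, A i)
    (hrec : Recursive u x) :
    ∀ i, IsBR u i x (x i) := by
  intro i
  by_contra hx
  obtain ⟨y, hxy, hlt⟩ := hΨ.exists_brStep_lt hx
  exact (hΨ.le_of_brPath (hrec y (.single hxy))).not_gt hlt
end

section
/- In a finite ordinal potential game, the set of recursive configurations is invariant with respect to best response paths: if x is recursive and there is a best response path from x to y, then y is recursive. -/
open Function

variable {ι : Type*} [Fintype ι] [DecidableEq ι] {A : ι → Type*} [∀ i, Fintype (A i)]

theorem recursive_invariant_brpath_general (u : ι → (∀ i, A i) → ℝ) (x y : ∀ i, A i)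
    (hrec : Recursive u x) (hpath : BRPath u x y) :
    Recursive u y := fun z hyz =>
  (hrec z (hpath.trans hyz)).trans hpath

/-- In a finite ordinal potential game, the set of recursive configurations is
invariant under best response paths. -/
theorem recursive_invariant_brpath (u : ι → (∀ i, A i) → ℝ) (Ψ : (∀ i, A i) → ℝ)
    (hΨ : OrdinalPotential u Ψ) (x y : ∀ i, A i)
    (hrec : Recursive u x) (hpath : BRPath u x y) :
    Recursive u y :=
  recursive_invariant_brpath_general u x y hrec hpath
end

section
/- If u_i(x) = n_i(x_{-i}) / Z(x) for functions n_i not depending on player i's own action and Z(x) = Σ_i n_i(x_{-i}) > 0, then the function Ψ(x) = -log Z(x) is an exact potential for the game with utilities log u_i(x), and an ordinal potential for the game with utilities u_i(x). -/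
open Function

variable {ι : Type*} [Fintype ι] [DecidableEq ι] {A : ι → Type*} [∀ i, Fintype (A i)]

/-! Player `i`'s numerator `n i` is the same at `x` and at `y`, so `log u i y - log u i x` only sees
the change of the normaliser `Z`; since `log` is strictly monotone and the `u i` are positive, an
exact potential for `log ∘ u` is automatically an ordinal potential for `u`. -/

section

variable {κ : Type*} {B : κ → Type*}

theorem eq_of_forall_update_eq [DecidableEq κ] {γ : Sort*} {f : (∀ k, B k) → γ} {i : κ}
    (hf : ∀ x b, f (update x i b) = f x) {x y : ∀ k, B k} (hxy : ∀ j, j ≠ i → x j = y j) :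
    f x = f y := by
  have hy : y = update x i (y i) := eq_update_iff.mpr ⟨rfl, fun j hj => (hxy j hj).symm⟩
  rw [hy, hf]

theorem ordinalPotential_of_log_exact {u : κ → (∀ k, B k) → ℝ} {Ψ : (∀ k, B k) → ℝ}
    (hu : ∀ i x, 0 < u i x)
    (hΨ : ∀ i (x y : ∀ k, B k), (∀ j, j ≠ i → x j = y j) →
      Real.log (u i y) - Real.log (u i x) = Ψ y - Ψ x) :
    OrdinalPotential u Ψ := by
  intro i x y hxy
  rw [← Real.log_lt_log_iff (hu i x) (hu i y), ← sub_pos, hΨ i x y hxy, sub_pos]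

end

theorem Real.log_div_sub_log_div {c a b : ℝ} (hc : c ≠ 0) (ha : a ≠ 0) (hb : b ≠ 0) :
    Real.log (c / b) - Real.log (c / a) = -Real.log b - -Real.log a := by
  rw [Real.log_div hc hb, Real.log_div hc ha]
  ring

/-- If `u i x = n i x / Z x` where `n i` does not depend on player `i`'s own action
and `Z x = ∑ j, n j x > 0`, then `Ψ x = -log Z x` is an exact potential for the game
with utilities `log ∘ u`, and an ordinal potential for the game with utilities `u`. -/
theorem neg_log_Z_is_potential (u : ι → (∀ i, A i) → ℝ) (n : ι → (∀ i, A i) → ℝ)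
    (hpos : ∀ i (x : ∀ i, A i), 0 < n i x)
    (hindep : ∀ i (x : ∀ i, A i) (b : A i), n i (update x i b) = n i x)
    (hu : ∀ i (x : ∀ i, A i), u i x = n i x / (∑ j, n j x)) :
    (∀ i (x y : ∀ i, A i), (∀ j, j ≠ i → x j = y j) →
        Real.log (u i y) - Real.log (u i x) =
          (-Real.log (∑ j, n j y)) - (-Real.log (∑ j, n j x))) ∧
    OrdinalPotential u (fun x => -Real.log (∑ j, n j x)) := by
  have hZ (i : ι) (x : ∀ i, A i) : 0 < ∑ j, n j x :=
    Finset.sum_pos (fun j _ => hpos j x) ⟨i, Finset.mem_univ i⟩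
  have hexact : ∀ i (x y : ∀ i, A i), (∀ j, j ≠ i → x j = y j) →
      Real.log (u i y) - Real.log (u i x) =
        (-Real.log (∑ j, n j y)) - (-Real.log (∑ j, n j x)) := by
    intro i x y hxy
    rw [hu, hu, eq_of_forall_update_eq (hindep i) hxy]
    exact Real.log_div_sub_log_div (hpos i y).ne' (hZ i x).ne' (hZ i y).ne'
  refine ⟨hexact, ordinalPotential_of_log_exact (fun i x => ?_) hexact⟩
  rw [hu]
  exact div_pos (hpos i x) (hZ i x)
end

section
/- For the PageRank Markov chain with transition matrix P = βR + (1-β)𝟙η^T, the stationary probability of node i equals π_i = 1 / (1 + (1-β) Σ_j η_j τ_j^i + (β/deg_i) Σ_{j ∈ N_i} τ_j^i), where τ_j^i are expected hitting times of node i. -/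
/-!
Kac's formula by double counting. If `τ` solves the first-step equations for the hitting
times of `i` and `π` is stationary, the defect `1 + (Pτ)_j - τ_j` vanishes off `i` and equals
the mean return time at `i`; on the other hand its `π`-average is `1 + (πP)·τ - π·τ = 1`.
-/

open Finset Matrix

section Kac

variable {V R : Type*} [Fintype V] [CommRing R]

def IsHittingTime (P : Matrix V V R) (i : V) (τ : V → R) : Prop :=
  τ i = 0 ∧ ∀ j, j ≠ i → τ j = 1 + (P *ᵥ τ) j

def meanReturnTime (P : Matrix V V R) (τ : V → R) (i : V) : R :=
  1 + (P *ᵥ τ) i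

theorem stationary_mul_meanReturnTime_eq_one {P : Matrix V V R} {i : V} {τ π : V → R}
    (hτ : IsHittingTime P i τ) (hπ : π ᵥ* P = π) (hπ1 : ∑ v, π v = 1) :
    π i * meanReturnTime P τ i = 1 := by
  obtain ⟨hτi, hτj⟩ := hτ
  have defect_sum : ∑ j, π j * (1 + (P *ᵥ τ) j - τ j) = π i * meanReturnTime P τ i := by
    rw [sum_eq_single i (fun j _ hj ↦ by rw [← hτj j hj, sub_self, mul_zero])
      (fun h ↦ absurd (mem_univ i) h), hτi, sub_zero, meanReturnTime]
  have defect_average : ∑ j, π j * (1 + (P *ᵥ τ) j - τ j) = 1 := by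
    have hπP := dotProduct_mulVec π P τ
    rw [hπ] at hπP
    simp only [dotProduct] at hπP
    simp only [mul_sub, mul_add, mul_one, sum_sub_distrib, sum_add_distrib, hπ1, hπP]
    ring
  rw [← defect_sum, defect_average]

end Kac

open Finset

variable {V : Type*} [Fintype V] [DecidableEq V]

/-- The linear system characterizing the expected hitting times `τ j = τ_j^i` of node `i`
for the Markov chain `P = βR + (1-β)𝟙ηᵀ` on the directed graph with
out-neighborhoods `N`. -/
def HittingSystem (N : V → Finset V) (β : ℝ) (η : V → ℝ) (i : V) (τ : V → ℝ) : Prop :=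
  τ i = 0 ∧ ∀ j, j ≠ i →
    τ j = 1 + (1 - β) * (∑ k, η k * τ k) + (β / ((N j).card : ℝ)) * ∑ k ∈ N j, τ k

/-- `Reach N j i` : there is a directed walk from `j` to `i` in the graph. -/
def Reach (N : V → Finset V) : V → V → Prop :=
  Relation.ReflTransGen (fun a b => b ∈ N a)

noncomputable def pageRankMatrix (N : V → Finset V) (β : ℝ) (η : V → ℝ) : Matrix V V ℝ :=
  fun j k ↦ β * (if k ∈ N j then ((N j).card : ℝ)⁻¹ else 0) + (1 - β) * η k

theorem pageRankMatrix_mulVec (N : V → Finset V) (β : ℝ) (η τ : V → ℝ) (j : V) :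
    (pageRankMatrix N β η *ᵥ τ) j
      = (1 - β) * (∑ k, η k * τ k) + (β / ((N j).card : ℝ)) * ∑ k ∈ N j, τ k := by
  simp only [mulVec, dotProduct, pageRankMatrix, add_mul, sum_add_distrib, ite_mul, zero_mul,
    mul_ite, mul_zero, ← sum_filter, filter_mem_eq_inter, univ_inter, mul_assoc, ← mul_sum]
  rw [div_eq_mul_inv]
  ring

theorem isHittingTime_pageRankMatrix {N : V → Finset V} {β : ℝ} {η : V → ℝ} {i : V}
    {τ : V → ℝ} (hτ : HittingSystem N β η i τ) : IsHittingTime (pageRankMatrix N β η) i τ := by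
  refine ⟨hτ.1, fun j hj ↦ ?_⟩
  rw [hτ.2 j hj, pageRankMatrix_mulVec, add_assoc]

theorem stationary_eq_inv_hitting_general (N : V → Finset V)
    (β : ℝ)
    (η : V → ℝ) (i : V)
    (τ : V → ℝ) (hτ : HittingSystem N β η i τ)
    (π : V → ℝ) (hπ1 : ∑ v, π v = 1)
    (hstat : ∀ k, π k = ∑ j, π j *
      (β * (if k ∈ N j then ((N j).card : ℝ)⁻¹ else 0) + (1 - β) * η k)) :
    π i = 1 / (1 + (1 - β) * (∑ j, η j * τ j)
        + (β / ((N i).card : ℝ)) * ∑ j ∈ N i, τ j) := by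
  have hπ : π ᵥ* pageRankMatrix N β η = π := funext fun k ↦ (hstat k).symm
  have kac := stationary_mul_meanReturnTime_eq_one (isHittingTime_pageRankMatrix hτ) hπ hπ1
  rw [meanReturnTime, pageRankMatrix_mulVec, ← add_assoc] at kac
  exact eq_one_div_of_mul_eq_one_left kac

/-- Kac-type formula for the PageRank chain: the stationary probability of node `i`
for `P = βR + (1-β)𝟙ηᵀ` equals
`1 / (1 + (1-β) Σ_j η_j τ_j + (β/deg_i) Σ_{j∈N_i} τ_j)` where `τ` are the expected
hitting times of `i`. -/
theorem stationary_eq_inv_hitting (N : V → Finset V)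
    (hloop : ∀ v, v ∉ N v) (hsink : ∀ v, (N v).Nonempty)
    (β : ℝ) (hβ : β ∈ Set.Ioo (0 : ℝ) 1)
    (η : V → ℝ) (hη0 : ∀ v, 0 < η v) (hη1 : ∑ v, η v = 1) (i : V)
    (τ : V → ℝ) (hτ : HittingSystem N β η i τ)
    (π : V → ℝ) (hπ0 : ∀ v, 0 ≤ π v) (hπ1 : ∑ v, π v = 1)
    (hstat : ∀ k, π k = ∑ j, π j *
      (β * (if k ∈ N j then ((N j).card : ℝ)⁻¹ else 0) + (1 - β) * η k)) :
    π i = 1 / (1 + (1 - β) * (∑ j, η j * τ j)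
        + (β / ((N i).card : ℝ)) * ∑ j ∈ N i, τ j) :=
  stationary_eq_inv_hitting_general N β η i τ hτ π hπ1 hstat
end

section
/- Let G = (V,E) be a directed graph with no sinks, β ∈ (0,1), and consider the hitting times τ_j^i for the chain P = βR + (1-β)𝟙η^T. Then for every node h not in the set N_i^{-∞} of nodes from which i is reachable, and every k ∈ N_i^{-∞}, one has τ_h^i = 1/(1-β) · (1 + (1-β)τ_η^i) and τ_h^i > τ_k^i. In particular all nodes outside N_i^{-∞} have equal hitting time to i, strictly larger than that of any node from which i is reachable. -/
/-!
Put `c = 1/(1-β) + τ_η`: the expected time of a walker who must first teleport (a geometric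
waiting time) and then starts afresh from `η`. Away from `i` the system reads
`τ_j = (1-β) c + β · (mean of τ over N j)`, so a discrete maximum principle traps `τ` between
`min 0 c` and `max 0 c`, and averaging against `η` rules out `c ≤ 0`. On the successor-closed set
of nodes that cannot reach `i` the minimum of `τ` is at least `c`, hence `τ ≡ c` there, whereas
`τ < c` propagates backwards along any walk ending at `i`, where `τ_i = 0`.
-/

open Finset

variable {V : Type*} [Fintype V] [DecidableEq V]

open scoped BigOperators

set_option linter.unusedSectionVars false

noncomputable def teleportTime (β : ℝ) (η τ : V → ℝ) : ℝ :=
  (1 / (1 - β)) * (1 + (1 - β) * ∑ j, η j * τ j)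

namespace HittingSystem

variable {N : V → Finset V} {β : ℝ} {η τ : V → ℝ} {i : V}

lemma one_sub_mul_teleportTime (hβ : β ≠ 1) :
    (1 - β) * teleportTime β η τ = 1 + (1 - β) * ∑ j, η j * τ j := by
  rw [teleportTime, one_div, mul_inv_cancel_left₀ (sub_ne_zero.mpr hβ.symm)]

lemma eq_teleportTime_add_expect (hτ : HittingSystem N β η i τ) (hβ : β ≠ 1) {j : V}
    (hj : j ≠ i) : τ j = (1 - β) * teleportTime β η τ + β * 𝔼 a ∈ N j, τ a := by
  rw [hτ.2 j hj, one_sub_mul_teleportTime hβ, expect_eq_sum_div_card]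
  ring

section MaximumPrinciple

variable (hτ : HittingSystem N β η i τ) (hβ₀ : 0 ≤ β) (hβ₁ : β < 1)
include hτ hβ₀ hβ₁

lemma teleportTime_le_of_le_neighbors {j : V} (hj : j ≠ i) (hN : (N j).Nonempty)
    (hmin : ∀ a ∈ N j, τ j ≤ τ a) : teleportTime β η τ ≤ τ j := by
  have hmean := le_expect hN hmin
  have hτj := hτ.eq_teleportTime_add_expect hβ₁.ne hj
  nlinarith

lemma le_teleportTime_of_neighbors_le {j : V} (hj : j ≠ i) (hN : (N j).Nonempty)
    (hmax : ∀ a ∈ N j, τ a ≤ τ j) : τ j ≤ teleportTime β η τ := by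
  have hmean := expect_le hN hmax
  have hτj := hτ.eq_teleportTime_add_expect hβ₁.ne hj
  nlinarith

variable (hsink : ∀ v, (N v).Nonempty)
include hsink

lemma min_zero_teleportTime_le (v : V) : min 0 (teleportTime β η τ) ≤ τ v := by
  obtain ⟨j, -, hj⟩ := exists_min_image univ τ ⟨v, mem_univ v⟩
  refine le_trans ?_ (hj v (mem_univ v))
  rcases eq_or_ne j i with rfl | hji
  · exact hτ.1 ▸ min_le_left _ _
  · exact min_le_of_right_le <|
      hτ.teleportTime_le_of_le_neighbors hβ₀ hβ₁ hji (hsink j) fun a _ => hj a (mem_univ a)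

lemma le_max_zero_teleportTime (v : V) : τ v ≤ max 0 (teleportTime β η τ) := by
  obtain ⟨j, -, hj⟩ := exists_max_image univ τ ⟨v, mem_univ v⟩
  refine le_trans (hj v (mem_univ v)) ?_
  rcases eq_or_ne j i with rfl | hji
  · exact hτ.1 ▸ le_max_left _ _
  · exact le_max_of_le_right <|
      hτ.le_teleportTime_of_neighbors_le hβ₀ hβ₁ hji (hsink j) fun a _ => hj a (mem_univ a)

lemma teleportTime_le_of_not_reach {v : V} (hv : ¬ Reach N v i) : teleportTime β η τ ≤ τ v := by
  classical
  set S := univ.filter fun w => ¬ Reach N w i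
  obtain ⟨j, hjS, hj⟩ := exists_min_image S τ ⟨v, by simpa [S] using hv⟩
  have hjS' : ¬ Reach N j i := by simpa [S] using hjS
  have hji : j ≠ i := by
    rintro rfl
    exact hjS' Relation.ReflTransGen.refl
  have hmin : ∀ a ∈ N j, τ j ≤ τ a := fun a ha =>
    hj a (mem_filter.mpr ⟨mem_univ a, fun hai => hjS' (Relation.ReflTransGen.head ha hai)⟩)
  exact (hτ.teleportTime_le_of_le_neighbors hβ₀ hβ₁ hji (hsink j) hmin).trans
    (hj v (by simpa [S] using hv))

variable (hη₀ : ∀ v, 0 ≤ η v) (hη₁ : ∑ v, η v = 1)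
include hη₀ hη₁

lemma teleportTime_pos : 0 < teleportTime β η τ := by
  set c := teleportTime β η τ
  by_contra! hc₀
  have hle : ∀ v, c ≤ τ v := fun v =>
    (min_eq_right hc₀).symm.le.trans (hτ.min_zero_teleportTime_le hβ₀ hβ₁ hsink v)
  have hmean : c ≤ ∑ v, η v * τ v :=
    calc c = ∑ v, η v * c := by rw [← sum_mul, hη₁, one_mul]
      _ ≤ ∑ v, η v * τ v := sum_le_sum fun v _ => mul_le_mul_of_nonneg_left (hle v) (hη₀ v)
  have hc := one_sub_mul_teleportTime (η := η) (τ := τ) hβ₁.ne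
  nlinarith

lemma le_teleportTime (v : V) : τ v ≤ teleportTime β η τ :=
  (hτ.le_max_zero_teleportTime hβ₀ hβ₁ hsink v).trans_eq
    (max_eq_right (hτ.teleportTime_pos hβ₀ hβ₁ hsink hη₀ hη₁).le)

end MaximumPrinciple

lemma lt_teleportTime_of_reach (hτ : HittingSystem N β η i τ) (hβ₀ : 0 < β) (hβ₁ : β < 1)
    (hsink : ∀ v, (N v).Nonempty) (hη₀ : ∀ v, 0 ≤ η v) (hη₁ : ∑ v, η v = 1) {v : V}
    (hv : Reach N v i) : τ v < teleportTime β η τ := by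
  have hpos := hτ.teleportTime_pos hβ₀.le hβ₁ hsink hη₀ hη₁
  induction hv using Relation.ReflTransGen.head_induction_on with
  | refl => exact hτ.1 ▸ hpos
  | @head a b hab _ ih =>
    rcases eq_or_ne a i with rfl | hai
    · exact hτ.1 ▸ hpos
    have hmean := expect_lt (fun x _ => hτ.le_teleportTime hβ₀.le hβ₁ hsink hη₀ hη₁ x)
      ⟨b, hab, ih⟩
    rw [hτ.eq_teleportTime_add_expect hβ₁.ne hai]
    nlinarith

end HittingSystem

theorem hitting_time_outside_reach_general (N : V → Finset V)
    (hsink : ∀ v, (N v).Nonempty)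
    (β : ℝ) (hβ : β ∈ Set.Ioo (0 : ℝ) 1)
    (η : V → ℝ) (hη0 : ∀ v, 0 ≤ η v) (hη1 : ∑ v, η v = 1) (i : V)
    (τ : V → ℝ) (hτ : HittingSystem N β η i τ) :
    ∀ h k : V, ¬ Reach N h i → Reach N k i →
      τ h = (1 / (1 - β)) * (1 + (1 - β) * ∑ j, η j * τ j) ∧ τ k < τ h := by
  intro h k hh hk
  have hτh : τ h = teleportTime β η τ :=
    le_antisymm (hτ.le_teleportTime hβ.1.le hβ.2 hsink hη0 hη1 h)
      (hτ.teleportTime_le_of_not_reach hβ.1.le hβ.2 hsink hh)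
  exact ⟨hτh, hτh ▸ hτ.lt_teleportTime_of_reach hβ.1 hβ.2 hsink hη0 hη1 hk⟩

/-- Nodes from which `i` is not reachable all have the same expected hitting time
`(1/(1-β)) (1 + (1-β) τ_η^i)`, strictly larger than the hitting time of any node
from which `i` is reachable. -/
theorem hitting_time_outside_reach (N : V → Finset V)
    (hloop : ∀ v, v ∉ N v) (hsink : ∀ v, (N v).Nonempty)
    (β : ℝ) (hβ : β ∈ Set.Ioo (0 : ℝ) 1)
    (η : V → ℝ) (hη0 : ∀ v, 0 ≤ η v) (hη1 : ∑ v, η v = 1) (i : V)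
    (τ : V → ℝ) (hτ : HittingSystem N β η i τ) :
    ∀ h k : V, ¬ Reach N h i → Reach N k i →
      τ h = (1 / (1 - β)) * (1 + (1 - β) * ∑ j, η j * τ j) ∧ τ k < τ h :=
  hitting_time_outside_reach_general N hsink β hβ η hη0 hη1 i τ hτ
end

section
/- Let G = (V,E) be a directed graph with no sinks and let τ_j^i be the hitting times for the chain P = βR + (1-β)𝟙η^T. If k ∈ N_i^{-∞}∖{i} and C ⊆ V∖{k,i} is a cut-set between k and i (every directed path from k to i passes through C), then τ_k^i > min_{j∈C} τ_j^i. -/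
open Finset

variable {V : Type*} [Fintype V] [DecidableEq V]

/-!
With `M = 1/(1-β) + ∑ η τ` the recursion reads `τ_j = (1-β) M + β · (mean of τ over N_j)`
for `j ≠ i`, so off `i` the function `τ` obeys a maximum principle with ceiling `M`:
`τ ≤ M` everywhere, and `τ_j ≥ M` at `j ≠ i` forces `τ ≥ M` on all of `N_j`. If `τ_k ≤ τ_j`
for all `j ∈ C`, the minimum of `τ` over the nodes reachable from `k` without entering `C`
sits at a node `m ≠ i` whose out-neighbours all have `τ ≥ τ_m`, whence `M ≤ τ_m ≤ τ_k`.
Pushing `τ ≥ M` along a walk from `k` to `i` gives `M ≤ τ_i = 0`, contradicting `M > 0`.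
-/

open scoped BigOperators

section MixedMean

variable {ι : Type*} {s : Finset ι} {f : ι → ℝ} {β c x : ℝ}

lemma le_of_eq_mixed_expect_of_forall_le (hβ0 : 0 ≤ β) (hβ1 : β < 1) (hs : s.Nonempty)
    (hx : x = (1 - β) * c + β * 𝔼 l ∈ s, f l) (h : ∀ l ∈ s, x ≤ f l) : c ≤ x := by
  have : β * x ≤ β * 𝔼 l ∈ s, f l := mul_le_mul_of_nonneg_left (le_expect hs h) hβ0
  nlinarith

lemma le_of_eq_mixed_expect_of_forall_ge (hβ0 : 0 ≤ β) (hβ1 : β < 1) (hs : s.Nonempty)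
    (hx : x = (1 - β) * c + β * 𝔼 l ∈ s, f l) (h : ∀ l ∈ s, f l ≤ x) : x ≤ c := by
  have : β * 𝔼 l ∈ s, f l ≤ β * x := mul_le_mul_of_nonneg_left (expect_le hs h) hβ0
  nlinarith

lemma forall_le_of_eq_mixed_expect_of_le (hβ0 : 0 < β)
    (hx : x = (1 - β) * c + β * 𝔼 l ∈ s, f l) (hcx : c ≤ x) (h : ∀ l ∈ s, f l ≤ c) :
    ∀ l ∈ s, c ≤ f l := by
  by_contra! hlt
  have : β * 𝔼 l ∈ s, f l < β * c := mul_lt_mul_of_pos_left (expect_lt h hlt) hβ0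
  linarith

end MixedMean

section MaximumPrinciple

variable {α : Type*} (N : α → Finset α) {β c : ℝ} {f : α → ℝ} {i : α}

lemma forall_le_of_eq_mixed_expect [Finite α] (hβ0 : 0 ≤ β) (hβ1 : β < 1)
    (hN : ∀ v, (N v).Nonempty) (hf : ∀ j ≠ i, f j = (1 - β) * c + β * 𝔼 l ∈ N j, f l)
    (hi : f i ≤ c) (v : α) : f v ≤ c := by
  obtain ⟨m, -, hm⟩ := Set.exists_max_image Set.univ f Set.finite_univ ⟨i, trivial⟩
  refine (hm v trivial).trans ?_
  rcases eq_or_ne m i with rfl | hmi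
  · exact hi
  · exact le_of_eq_mixed_expect_of_forall_ge hβ0 hβ1 (hN m) (hf m hmi) fun l _ ↦ hm l trivial

lemma le_of_reach_of_le (hβ0 : 0 < β)
    (hf : ∀ j ≠ i, f j = (1 - β) * c + β * 𝔼 l ∈ N j, f l) (hle : ∀ v, f v ≤ c) {k : α}
    (hreach : Reach N k i) (hk : c ≤ f k) : c ≤ f i := by
  induction hreach using Relation.ReflTransGen.head_induction_on with
  | refl => exact hk
  | @head a b hab _ ih =>
    rcases eq_or_ne a i with rfl | hai
    · exact hk
    · exact ih (forall_le_of_eq_mixed_expect_of_le hβ0 (hf a hai) hk (fun l _ ↦ hle l) b hab)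

end MaximumPrinciple

lemma exists_reach_avoiding_forall_le {α : Type*} [Finite α] (N : α → Finset α)
    (C : Finset α) (f : α → ℝ) (k : α) (hC : ∀ j ∈ C, f k ≤ f j) :
    ∃ m, Relation.ReflTransGen (fun a b => b ∈ N a ∧ b ∉ C) k m ∧ f m ≤ f k ∧
      ∀ l ∈ N m, f m ≤ f l := by
  obtain ⟨m, hkm, hm⟩ := Set.exists_min_image
    {v | Relation.ReflTransGen (fun a b => b ∈ N a ∧ b ∉ C) k v} f (Set.toFinite _)
    ⟨k, Relation.ReflTransGen.refl⟩
  have hmk : f m ≤ f k := hm k Relation.ReflTransGen.refl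
  refine ⟨m, hkm, hmk, fun l hl ↦ ?_⟩
  by_cases hlC : l ∈ C
  · exact hmk.trans (hC l hlC)
  · exact hm l (hkm.tail ⟨hl, hlC⟩)

namespace HittingSystem

variable {α : Type*} [Fintype α] {N : α → Finset α} {β : ℝ} {η : α → ℝ} {i : α}
  {τ : α → ℝ}

lemma eq_mixed_expect (hτ : HittingSystem N β η i τ) (hβ1 : β < 1) (j : α) (hj : j ≠ i) :
    τ j = (1 - β) * (1 / (1 - β) + ∑ v, η v * τ v) + β * 𝔼 l ∈ N j, τ l := by
  rw [hτ.2 j hj, expect_eq_sum_div_card, mul_add, mul_one_div_cancel (by linarith)]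
  ring

lemma nonneg (hτ : HittingSystem N β η i τ) (hN : ∀ v, (N v).Nonempty)
    (hβ0 : 0 ≤ β) (hβ1 : β < 1) (hη0 : ∀ v, 0 ≤ η v) (hη1 : ∑ v, η v = 1) (v : α) :
    0 ≤ τ v := by
  obtain ⟨m, -, hm⟩ := exists_min_image univ τ ⟨i, mem_univ i⟩
  rcases eq_or_ne m i with rfl | hmi
  · exact hτ.1 ▸ hm v (mem_univ v)
  · have hmean : τ m ≤ ∑ v, η v * τ v := calc
      τ m = ∑ v, η v * τ m := by rw [← sum_mul, hη1, one_mul]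
      _ ≤ ∑ v, η v * τ v :=
        sum_le_sum fun v _ ↦ mul_le_mul_of_nonneg_left (hm v (mem_univ v)) (hη0 v)
    have hceil := le_of_eq_mixed_expect_of_forall_le hβ0 hβ1 (hN m)
      (hτ.eq_mixed_expect hβ1 m hmi) fun l _ ↦ hm l (mem_univ l)
    have : 0 < 1 / (1 - β) := one_div_pos.2 (by linarith)
    linarith

end HittingSystem

theorem hitting_time_cutset_general (N : V → Finset V)
    (hsink : ∀ v, (N v).Nonempty)
    (β : ℝ) (hβ : β ∈ Set.Ioo (0 : ℝ) 1)
    (η : V → ℝ) (hη0 : ∀ v, 0 ≤ η v) (hη1 : ∑ v, η v = 1) (i : V)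
    (τ : V → ℝ) (hτ : HittingSystem N β η i τ)
    (k : V) (hreach : Reach N k i)
    (C : Finset V)
    (hcut : ¬ Relation.ReflTransGen (fun a b => b ∈ N a ∧ b ∉ C) k i) :
    ∃ j ∈ C, τ j < τ k := by
  obtain ⟨hβ0, hβ1⟩ := hβ
  set M := 1 / (1 - β) + ∑ v, η v * τ v
  have hmix := hτ.eq_mixed_expect hβ1
  have hM : 0 < M := add_pos_of_pos_of_nonneg (one_div_pos.2 (by linarith))
    (sum_nonneg fun v _ ↦ mul_nonneg (hη0 v) (hτ.nonneg hsink hβ0.le hβ1 hη0 hη1 v))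
  have hceil : ∀ v, τ v ≤ M :=
    forall_le_of_eq_mixed_expect N hβ0.le hβ1 hsink hmix (hτ.1 ▸ hM.le)
  by_contra! hC
  obtain ⟨m, hkm, hmk, hmin⟩ := exists_reach_avoiding_forall_le N C τ k hC
  have hmi : m ≠ i := by rintro rfl; exact hcut hkm
  have hMm : M ≤ τ m :=
    le_of_eq_mixed_expect_of_forall_le hβ0.le hβ1 (hsink m) (hmix m hmi) hmin
  have hMi := le_of_reach_of_le N hβ0 hmix hceil hreach (hMm.trans hmk)
  linarith [hτ.1]

/-- Cut-set inequality for hitting times: if every directed path from `k` to `i`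
passes through the cut-set `C ⊆ V∖{k,i}`, then `τ_k > min_{j∈C} τ_j`. -/
theorem hitting_time_cutset (N : V → Finset V)
    (hloop : ∀ v, v ∉ N v) (hsink : ∀ v, (N v).Nonempty)
    (β : ℝ) (hβ : β ∈ Set.Ioo (0 : ℝ) 1)
    (η : V → ℝ) (hη0 : ∀ v, 0 ≤ η v) (hη1 : ∑ v, η v = 1) (i : V)
    (τ : V → ℝ) (hτ : HittingSystem N β η i τ)
    (k : V) (hk : k ≠ i) (hreach : Reach N k i)
    (C : Finset V) (hCi : i ∉ C) (hCk : k ∉ C)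
    (hcut : ¬ Relation.ReflTransGen (fun a b => b ∈ N a ∧ b ∉ C) k i) :
    ∃ j ∈ C, τ j < τ k :=
  hitting_time_cutset_general N hsink β hβ η hη0 hη1 i τ hτ k hreach C hcut
end

section
/- Let G be a directed graph with no sinks and τ^i the hitting times of node i for the chain P = βR + (1-β)𝟙η^T. If h, j are two nodes distinct from i with deg_h = deg_j and N_j∖{h} = N_h∖{j}, then τ_h^i = τ_j^i. -/
open Finset

variable {V : Type*} [Fintype V] [DecidableEq V]

/-! Subtracting the equations for `h` and `j` leaves `τ_h - τ_j = (β/d)(Σ_{N_h} τ - Σ_{N_j} τ)`.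
The common neighbours cancel, so the right side is either `0` (when `N_h = N_j`) or
`-(β/d)(τ_h - τ_j)` (when `h, j` point to each other), and `1 + β/d > 0` forces `τ_h = τ_j`. -/

namespace Finset

variable {α M : Type*} [DecidableEq α] {s t : Finset α} {a b : α}

theorem mem_iff_mem_of_erase_eq_erase (hst : s.erase a = t.erase b) (hcard : #s = #t) :
    a ∈ s ↔ b ∈ t := by
  have hcard_erase := congrArg card hst
  rw [card_erase_eq_ite, card_erase_eq_ite] at hcard_erase
  split_ifs at hcard_erase <;> grind [card_pos]

theorem sum_sub_sum_of_erase_eq_erase [AddCommGroup M] (f : α → M)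
    (hst : s.erase a = t.erase b) (hcard : #s = #t) :
    ∑ x ∈ s, f x - ∑ x ∈ t, f x = if a ∈ s then f a - f b else 0 := by
  by_cases ha : a ∈ s
  · have hb : b ∈ t := (mem_iff_mem_of_erase_eq_erase hst hcard).1 ha
    rw [if_pos ha, ← add_sum_erase s f ha, ← add_sum_erase t f hb, hst]
    abel
  · have hb : b ∉ t := mt (mem_iff_mem_of_erase_eq_erase hst hcard).2 ha
    have hs_eq : s = t := by
      rw [← erase_eq_of_notMem ha, hst, erase_eq_of_notMem hb]
    subst hs_eq
    simp [ha]

end Finset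

theorem hitting_time_symmetric_general (N : V → Finset V)
    (β : ℝ) (hβ : β ∈ Set.Ioo (0 : ℝ) 1)
    (η : V → ℝ) (i : V)
    (τ : V → ℝ) (hτ : HittingSystem N β η i τ)
    (h j : V) (hhi : h ≠ i) (hji : j ≠ i)
    (hdeg : (N h).card = (N j).card)
    (hnbr : (N j).erase h = (N h).erase j) :
    τ h = τ j := by
  have key : τ h - τ j = β / #(N j) * (∑ k ∈ N h, τ k - ∑ k ∈ N j, τ k) := by
    rw [hτ.2 h hhi, hτ.2 j hji, hdeg]
    ring
  rw [← neg_sub (∑ k ∈ N j, τ k), sum_sub_sum_of_erase_eq_erase τ hnbr hdeg.symm] at key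
  have hc : 0 ≤ β / #(N j) := div_nonneg hβ.1.le (Nat.cast_nonneg _)
  split_ifs at key
  · have hprod : (τ h - τ j) * (1 + β / #(N j)) = 0 := by linear_combination key
    rcases mul_eq_zero.1 hprod with hsub | hone
    · exact sub_eq_zero.1 hsub
    · linarith
  · simpa [sub_eq_zero] using key

/-- Two nodes `h, j ≠ i` with the same out-degree and with
`N_j ∖ {h} = N_h ∖ {j}` have equal expected hitting times of `i`. -/
theorem hitting_time_symmetric (N : V → Finset V)
    (hloop : ∀ v, v ∉ N v) (hsink : ∀ v, (N v).Nonempty)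
    (β : ℝ) (hβ : β ∈ Set.Ioo (0 : ℝ) 1)
    (η : V → ℝ) (hη0 : ∀ v, 0 ≤ η v) (hη1 : ∑ v, η v = 1) (i : V)
    (τ : V → ℝ) (hτ : HittingSystem N β η i τ)
    (h j : V) (hhi : h ≠ i) (hji : j ≠ i)
    (hdeg : (N h).card = (N j).card)
    (hnbr : (N j).erase h = (N h).erase j) :
    τ h = τ j :=
  hitting_time_symmetric_general N β hβ η i τ hτ h j hhi hji hdeg hnbr
end

section
/- Let x be a Nash equilibrium of a centrality game whose graph G(x) is strongly connected with n nodes, minimum out-degree d_*, c_2 undirected links, and c_3 three-cycles. Then 2c_2 ≥ n and d_* c_3 + 2c_2 ≥ n d_*. -/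
open Function Finset Matrix

variable {V : Type*} [Fintype V] [DecidableEq V]

/-- The PageRank centrality vector `π = (1-β)(I - βRᵀ)⁻¹ η` of the directed graph
with out-neighborhoods `E`, discount factor `β` and intrinsic centrality `η`. -/
noncomputable def pagerank (β : ℝ) (η : V → ℝ) (E : V → Finset V) : V → ℝ :=
  (1 - β) • (((1 : Matrix V V ℝ) -
      β • (Matrix.of fun j k : V => if k ∈ E j then ((E j).card : ℝ)⁻¹ else 0)ᵀ)⁻¹).mulVec η

/-- A configuration of the centrality game with out-degree profile `d`:
each node `i` wires `d i` out-links, none of them a self-loop. -/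
def ValidConf (d : V → ℕ) (x : V → Finset V) : Prop :=
  ∀ i, i ∉ x i ∧ (x i).card = d i

/-- Nash equilibrium of the centrality game `Γ(V,β,η,d)`: a valid configuration in
which no player can strictly increase her own PageRank centrality by rewiring her
out-links. -/
def NashEq (β : ℝ) (η : V → ℝ) (d : V → ℕ) (x : V → Finset V) : Prop :=
  ValidConf d x ∧ ∀ i (b : Finset V), i ∉ b → b.card = d i →
    pagerank β η (update x i b) i ≤ pagerank β η x i

/-!
Let `G = (1 - βR)⁻¹` be the resolvent of the random walk `R` on `G(x)`, so that the centrality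
of `i` is `(1 - β) ∑ᵥ ηᵥ Gᵥᵢ`. Splitting walks at their first visit to `i` gives
`Gᵥᵢ = Gᵢᵢ Tᵥ`, where `T` is the first-passage generating function to `i`, which does not depend
on the out-links of `i`, and `Gᵢᵢ (1 - β · avg_{j ∈ xᵢ} Tⱼ) = 1`. Hence in an equilibrium every
node links to nodes with the largest values of its `T`. As `Tₚ = β · avg_{m ∈ xₚ} Tₘ` is
smaller than `max_{m ∈ xₚ} Tₘ` for `p ≠ i`, the out-neighbour of `i` with the largest `T` links
back to `i`, and the non-reciprocating out-neighbour `p` with the largest `T` links to a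
reciprocal out-neighbour of `i`, closing a 3-cycle.

Counting: every node has a reciprocal link, so `n ≤ 2c₂`. A node all of whose out-links are
reciprocated has at least `d⋆` reciprocal links, and any other node marks a 3-cycle through it,
no 3-cycle being marked by two nodes; this gives `n d⋆ ≤ 2c₂ + d⋆ c₃`.
-/

namespace CentralityGame

section Counting

variable (x : V → Finset V)

def reciprocalPairs : Finset (V × V) :=
  Finset.univ.filter fun p : V × V => p.2 ∈ x p.1 ∧ p.1 ∈ x p.2

def threeCycles : Finset (V × V × V) :=
  Finset.univ.filter fun t : V × V × V => t.2.1 ∈ x t.1 ∧ t.2.2 ∈ x t.2.1 ∧ t.1 ∈ x t.2.2 ∧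
    t.1 ≠ t.2.1 ∧ t.2.1 ≠ t.2.2 ∧ t.1 ≠ t.2.2

/-- The 3-cycle `a → b → c → a` closing the unreciprocated link `a → b` through a reciprocal
neighbour `c` of `a`. -/
abbrev IsReturnTriangle {W : Type*} (x : W → Finset W) (a b c : W) : Prop :=
  b ∈ x a ∧ a ∉ x b ∧ c ∈ x b ∧ c ∈ x a ∧ a ∈ x c

lemma IsReturnTriangle.not_rotate {W : Type*} {x : W → Finset W} {a b c : W}
    (h : IsReturnTriangle x a b c) : ¬ IsReturnTriangle x b c a :=
  fun h' => h.2.1 h'.2.2.2.1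

lemma IsReturnTriangle.not_rotate_rotate {W : Type*} {x : W → Finset W} {a b c : W}
    (h : IsReturnTriangle x a b c) : ¬ IsReturnTriangle x c a b :=
  fun h' => h'.2.1 h.2.2.2.1

def returnTriangles : Finset (V × V × V) :=
  Finset.univ.filter fun t : V × V × V => IsReturnTriangle x t.1 t.2.1 t.2.2

variable {x} in
lemma mem_returnTriangles {t : V × V × V} :
    t ∈ returnTriangles x ↔ IsReturnTriangle x t.1 t.2.1 t.2.2 := by
  simp [returnTriangles]

lemma card_reciprocalPairs :
    (reciprocalPairs x).card = ∑ i, ((x i).filter fun j => i ∈ x j).card := by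
  rw [reciprocalPairs, Finset.card_filter, Fintype.sum_prod_type]
  refine Finset.sum_congr rfl fun i _ => ?_
  rw [← Finset.card_filter]
  congr 1
  ext j
  simp

lemma card_le_card_reciprocalPairs (h : ∀ i, ∃ j ∈ x i, i ∈ x j) :
    Fintype.card V ≤ (reciprocalPairs x).card := by
  rw [card_reciprocalPairs, Fintype.card_eq_sum_ones]
  refine Finset.sum_le_sum fun i _ => Finset.one_le_card.mpr ?_
  obtain ⟨j, hj, hij⟩ := h i
  exact ⟨j, Finset.mem_filter.mpr ⟨hj, hij⟩⟩

lemma card_mul_le_card_returnTriangles (dstar : ℕ) (hdeg : ∀ i, dstar ≤ (x i).card)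
    (htri : ∀ i, ∀ p ∈ x i, i ∉ x p → ∃ b c, IsReturnTriangle x i b c) :
    Fintype.card V * dstar ≤ dstar * (returnTriangles x).card + (reciprocalPairs x).card := by
  set A := Finset.univ.filter fun i => ∃ p ∈ x i, i ∉ x p
  have hnode (i : V) :
      dstar ≤ (if i ∈ A then dstar else 0) + ((x i).filter fun j => i ∈ x j).card := by
    by_cases hi : i ∈ A
    · simp [hi]
    · have hall : ∀ p ∈ x i, i ∈ x p := by simpa [A] using hi
      simpa [hi, Finset.filter_true_of_mem hall] using hdeg i
  have hA : A ⊆ (returnTriangles x).image Prod.fst := by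
    intro i hi
    obtain ⟨p, hp, hip⟩ := (Finset.mem_filter.mp hi).2
    obtain ⟨b, c, hbc⟩ := htri i p hp hip
    exact Finset.mem_image.mpr ⟨(i, b, c), mem_returnTriangles.mpr hbc, rfl⟩
  calc Fintype.card V * dstar = ∑ _i : V, dstar := by simp [mul_comm]
    _ ≤ ∑ i, ((if i ∈ A then dstar else 0) + ((x i).filter fun j => i ∈ x j).card) :=
        Finset.sum_le_sum fun i _ => hnode i
    _ = dstar * A.card + (reciprocalPairs x).card := by
        rw [Finset.sum_add_distrib, card_reciprocalPairs, Finset.sum_ite_mem, Finset.univ_inter,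
          Finset.sum_const, smul_eq_mul, mul_comm]
    _ ≤ dstar * (returnTriangles x).card + (reciprocalPairs x).card := by
        gcongr
        exact (Finset.card_le_card hA).trans Finset.card_image_le

variable {x}

lemma IsReturnTriangle.rotations_mem_threeCycles (hloop : ∀ i, i ∉ x i) {a b c : V}
    (h : IsReturnTriangle x a b c) :
    (a, b, c) ∈ threeCycles x ∧ (b, c, a) ∈ threeCycles x ∧ (c, a, b) ∈ threeCycles x := by
  obtain ⟨hab, -, hbc, -, hca⟩ := h
  have hne {u v : V} (huv : v ∈ x u) : u ≠ v := by
    rintro rfl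
    exact hloop u huv
  simp [threeCycles, hab, hbc, hca, hne hab, hne hbc, hne hca, (hne hab).symm, (hne hbc).symm,
    (hne hca).symm]

/-- Of the three rotations of a 3-cycle at most one is a return triangle. -/
lemma three_mul_card_returnTriangles_le (hloop : ∀ i, i ∉ x i) :
    3 * (returnTriangles x).card ≤ (threeCycles x).card := by
  set R := returnTriangles x
  let r₁ : V × V × V → V × V × V := fun t => (t.2.1, t.2.2, t.1)
  let r₂ : V × V × V → V × V × V := fun t => (t.2.2, t.1, t.2.1)
  have hr₁ : Injective r₁ := by
    rintro ⟨a, b, c⟩ ⟨a', b', c'⟩ h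
    simp_all [r₁]
  have hr₂ : Injective r₂ := by
    rintro ⟨a, b, c⟩ ⟨a', b', c'⟩ h
    simp_all [r₂]
  have h01 : Disjoint R (R.image r₁) := by
    refine Finset.disjoint_left.mpr fun t ht ht' => ?_
    obtain ⟨s, hs, rfl⟩ := Finset.mem_image.mp ht'
    exact (mem_returnTriangles.mp hs).not_rotate (mem_returnTriangles.mp ht)
  have h02 : Disjoint R (R.image r₂) := by
    refine Finset.disjoint_left.mpr fun t ht ht' => ?_
    obtain ⟨s, hs, rfl⟩ := Finset.mem_image.mp ht'
    exact (mem_returnTriangles.mp hs).not_rotate_rotate (mem_returnTriangles.mp ht)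
  have h12 : Disjoint (R.image r₁) (R.image r₂) := by
    refine Finset.disjoint_left.mpr fun t ht ht' => ?_
    obtain ⟨⟨a, b, c⟩, hs, rfl⟩ := Finset.mem_image.mp ht
    obtain ⟨⟨a', b', c'⟩, hs', h⟩ := Finset.mem_image.mp ht'
    simp only [r₁, r₂, Prod.mk.injEq] at h
    obtain ⟨rfl, rfl, rfl⟩ := h
    exact (mem_returnTriangles.mp hs).not_rotate_rotate (mem_returnTriangles.mp hs')
  have hsub : R ∪ R.image r₁ ∪ R.image r₂ ⊆ threeCycles x := by
    intro t ht
    simp only [Finset.mem_union, Finset.mem_image] at ht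
    rcases ht with (ht | ⟨s, hs, rfl⟩) | ⟨s, hs, rfl⟩
    exacts [((mem_returnTriangles.mp ht).rotations_mem_threeCycles hloop).1,
      ((mem_returnTriangles.mp hs).rotations_mem_threeCycles hloop).2.1,
      ((mem_returnTriangles.mp hs).rotations_mem_threeCycles hloop).2.2]
  calc 3 * R.card = R.card + (R.image r₁).card + (R.image r₂).card := by
        rw [Finset.card_image_of_injective _ hr₁, Finset.card_image_of_injective _ hr₂]
        ring
    _ = (R ∪ R.image r₁ ∪ R.image r₂).card := by
        rw [Finset.card_union_of_disjoint (Finset.disjoint_union_left.mpr ⟨h02, h12⟩),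
          Finset.card_union_of_disjoint h01]
    _ ≤ (threeCycles x).card := Finset.card_le_card hsub

end Counting

section Resolvent

attribute [local instance]
  Matrix.linftyOpNormedAddCommGroup Matrix.linftyOpNormedRing Matrix.linftyOpNormedAlgebra

variable {β : ℝ} (E : V → Finset V)

noncomputable def transitionMatrix : Matrix V V ℝ :=
  Matrix.of fun j k : V => if k ∈ E j then ((E j).card : ℝ)⁻¹ else 0

lemma sum_norm_transitionMatrix_le_one (j : V) : ∑ k, ‖transitionMatrix E j k‖ ≤ 1 := by
  simp only [transitionMatrix, Matrix.of_apply, apply_ite norm, norm_zero, norm_inv,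
    Real.norm_natCast, Finset.sum_ite_mem, Finset.univ_inter, Finset.sum_const, nsmul_eq_mul]
  rcases (E j).card.eq_zero_or_pos with h | h
  · simp [h]
  · rw [mul_inv_cancel₀ (by positivity)]

lemma norm_transitionMatrix_le_one : ‖transitionMatrix E‖ ≤ 1 := by
  rw [Matrix.linfty_opNorm_def, NNReal.coe_le_one]
  refine Finset.sup_le fun j _ => ?_
  rw [← NNReal.coe_le_coe]
  push_cast
  exact sum_norm_transitionMatrix_le_one E j

lemma norm_smul_transitionMatrix_lt_one (hβ : |β| < 1) : ‖β • transitionMatrix E‖ < 1 :=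
  calc ‖β • transitionMatrix E‖ ≤ |β| * 1 := by
        rw [norm_smul, Real.norm_eq_abs]
        gcongr
        exact norm_transitionMatrix_le_one E
    _ < 1 := by rwa [mul_one]

lemma isUnit_det_one_sub_smul_transitionMatrix (hβ : |β| < 1) :
    IsUnit (1 - β • transitionMatrix E).det :=
  (Matrix.isUnit_iff_isUnit_det _).mp
    (isUnit_one_sub_of_norm_lt_one (norm_smul_transitionMatrix_lt_one E hβ))

lemma one_sub_smul_transitionMatrix_mulVec_apply (y : V → ℝ) (v : V) :
    ((1 - β • transitionMatrix E) *ᵥ y) v = y v - β * ((E v).card : ℝ)⁻¹ * ∑ m ∈ E v, y m := by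
  rw [Matrix.sub_mulVec, Matrix.one_mulVec, Matrix.smul_mulVec, Pi.sub_apply, Pi.smul_apply,
    smul_eq_mul, Matrix.mulVec, dotProduct]
  simp only [transitionMatrix, Matrix.of_apply, ite_mul, zero_mul, Finset.sum_ite_mem,
    Finset.univ_inter, ← Finset.mul_sum, mul_assoc]

lemma pow_smul_transitionMatrix_nonneg (hβ : 0 ≤ β) (t : ℕ) (j k : V) :
    0 ≤ ((β • transitionMatrix E) ^ t) j k := by
  induction t generalizing k with
  | zero => rw [pow_zero, Matrix.one_apply]; positivity
  | succ t ih =>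
    rw [pow_succ, Matrix.mul_apply]
    refine Finset.sum_nonneg fun m _ => mul_nonneg (ih m) ?_
    rw [Matrix.smul_apply, transitionMatrix, Matrix.of_apply, smul_eq_mul]
    split_ifs <;> positivity

noncomputable def resolvent (β : ℝ) (E : V → Finset V) : Matrix V V ℝ :=
  (1 - β • transitionMatrix E)⁻¹

lemma hasSum_resolvent (hβ : |β| < 1) :
    HasSum (fun t : ℕ => (β • transitionMatrix E) ^ t) (resolvent β E) := by
  rw [resolvent, Matrix.nonsing_inv_eq_ringInverse]
  exact hasSum_geom_series_inverse _ (norm_smul_transitionMatrix_lt_one E hβ)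

lemma resolvent_nonneg (hβ₀ : 0 ≤ β) (hβ₁ : β < 1) (j k : V) : 0 ≤ resolvent β E j k :=
  have hβ : |β| < 1 := by rwa [abs_of_nonneg hβ₀]
  (Pi.hasSum.mp (Pi.hasSum.mp (hasSum_resolvent E hβ) j) k).nonneg
    fun t => pow_smul_transitionMatrix_nonneg E hβ₀ t j k

lemma one_sub_smul_transitionMatrix_mulVec_resolvent (hβ : |β| < 1) (b : V → ℝ) :
    (1 - β • transitionMatrix E) *ᵥ (resolvent β E *ᵥ b) = b := by
  rw [resolvent, Matrix.mulVec_mulVec,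
    Matrix.mul_nonsing_inv _ (isUnit_det_one_sub_smul_transitionMatrix E hβ), Matrix.one_mulVec]

lemma eq_resolvent_mulVec (hβ : |β| < 1) {y b : V → ℝ}
    (h : (1 - β • transitionMatrix E) *ᵥ y = b) : y = resolvent β E *ᵥ b := by
  rw [← h, resolvent, Matrix.mulVec_mulVec,
    Matrix.nonsing_inv_mul _ (isUnit_det_one_sub_smul_transitionMatrix E hβ), Matrix.one_mulVec]

lemma resolvent_apply (hβ : |β| < 1) (j k : V) :
    resolvent β E j k
      = (if j = k then 1 else 0) + β * ((E j).card : ℝ)⁻¹ * ∑ m ∈ E j, resolvent β E m k := by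
  have h := congrFun (one_sub_smul_transitionMatrix_mulVec_resolvent E hβ (Pi.single k 1)) j
  simp only [Matrix.mulVec_single_one, Matrix.col_apply, one_sub_smul_transitionMatrix_mulVec_apply,
    Pi.single_apply] at h
  linarith

lemma resolvent_apply_pos (hβ₀ : 0 < β) (hβ₁ : β < 1) {j k : V}
    (hjk : Relation.ReflTransGen (fun a b => b ∈ E a) j k) : 0 < resolvent β E j k := by
  have hβ : |β| < 1 := by rwa [abs_of_pos hβ₀]
  induction hjk using Relation.ReflTransGen.head_induction_on with
  | refl =>
    have hsum : 0 ≤ β * ((E k).card : ℝ)⁻¹ * ∑ m ∈ E k, resolvent β E m k :=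
      mul_nonneg (by positivity) (Finset.sum_nonneg fun m _ => resolvent_nonneg E hβ₀.le hβ₁ m k)
    rw [resolvent_apply E hβ, if_pos rfl]
    linarith
  | @head a b hab _ ih =>
    have hcard : (0 : ℝ) < (E a).card := by exact_mod_cast Finset.card_pos.mpr ⟨b, hab⟩
    have hterm : 0 < β * ((E a).card : ℝ)⁻¹ * ∑ m ∈ E a, resolvent β E m k :=
      mul_pos (by positivity) (lt_of_lt_of_le ih (Finset.single_le_sum
        (fun m _ => resolvent_nonneg E hβ₀.le hβ₁ m k) hab))
    rw [resolvent_apply E hβ]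
    split_ifs <;> linarith

lemma pagerank_apply (η : V → ℝ) (i : V) :
    pagerank β η E i = (1 - β) * ∑ v, η v * resolvent β E v i := by
  have h : (1 : Matrix V V ℝ) - β • (Matrix.of fun j k : V =>
      if k ∈ E j then ((E j).card : ℝ)⁻¹ else 0)ᵀ = (1 - β • transitionMatrix E)ᵀ := by
    rw [Matrix.transpose_sub, Matrix.transpose_one, Matrix.transpose_smul, transitionMatrix]
  rw [pagerank, h, ← Matrix.transpose_nonsing_inv, Matrix.mulVec_transpose, Pi.smul_apply,
    smul_eq_mul, resolvent, Matrix.vecMul, dotProduct]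

end Resolvent

section FirstPassage

variable {β : ℝ} (E : V → Finset V) (i : V)

/-- Deleting the out-links of `i` makes `i` absorbing, so only walks up to their first visit to
`i` are counted. -/
noncomputable def firstPassage (β : ℝ) (E : V → Finset V) (i : V) : V → ℝ :=
  fun v => resolvent β (update E i ∅) v i

lemma firstPassage_update (s : Finset V) :
    firstPassage β (update E i s) i = firstPassage β E i := by
  unfold firstPassage
  rw [update_idem]

lemma firstPassage_eq_of_ne (hβ : |β| < 1) {p : V} (hp : p ≠ i) :
    firstPassage β E i p = β * ((E p).card : ℝ)⁻¹ * ∑ m ∈ E p, firstPassage β E i m := by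
  rw [firstPassage, resolvent_apply _ hβ, if_neg hp, zero_add, update_of_ne hp]
  rfl

lemma reflTransGen_update {W : Type*} [DecidableEq W] {E : W → Finset W} {v i : W}
    (s : Finset W) (h : Relation.ReflTransGen (fun a b => b ∈ E a) v i) :
    Relation.ReflTransGen (fun a b => b ∈ update E i s a) v i := by
  induction h using Relation.ReflTransGen.head_induction_on with
  | refl => exact .refl
  | @head a b hab _ ih =>
    by_cases ha : a = i
    · exact ha ▸ .refl
    · exact .head (by rwa [update_of_ne ha]) ih

lemma firstPassage_pos (hβ₀ : 0 < β) (hβ₁ : β < 1) {v : V}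
    (h : Relation.ReflTransGen (fun a b => b ∈ E a) v i) : 0 < firstPassage β E i v :=
  resolvent_apply_pos _ hβ₀ hβ₁ (reflTransGen_update ∅ h)

/-- Walks from `v` to `i` split at their first visit to `i`: the `i`-th column of the resolvent
solves the system of `update E i ∅`, which differs only in row `i`, with right-hand side
`Gᵢᵢ eᵢ`. -/
lemma resolvent_apply_eq_mul_firstPassage (hβ : |β| < 1) (v : V) :
    resolvent β E v i = resolvent β E i i * firstPassage β E i v := by
  have hy : (1 - β • transitionMatrix E) *ᵥ (resolvent β E).col i = Pi.single i 1 := by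
    simpa only [Matrix.mulVec_single_one]
      using one_sub_smul_transitionMatrix_mulVec_resolvent E hβ (Pi.single i 1)
  have hy' : (1 - β • transitionMatrix (update E i ∅)) *ᵥ (resolvent β E).col i
      = Pi.single i (resolvent β E i i) := by
    funext u
    rw [one_sub_smul_transitionMatrix_mulVec_apply]
    by_cases hu : u = i
    · subst hu
      simp
    · rw [update_of_ne hu, ← one_sub_smul_transitionMatrix_mulVec_apply, hy,
        Pi.single_eq_of_ne hu, Pi.single_eq_of_ne hu]
  have h := congrFun (eq_resolvent_mulVec _ hβ hy') v
  rw [Matrix.mulVec_single] at h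
  simpa [firstPassage, mul_comm] using h

lemma resolvent_self_mul_eq_one (hβ : |β| < 1) :
    resolvent β E i i * (1 - β * ((E i).card : ℝ)⁻¹ * ∑ j ∈ E i, firstPassage β E i j) = 1 := by
  have h := resolvent_apply E hβ i i
  rw [if_pos rfl, Finset.sum_congr rfl fun m _ => resolvent_apply_eq_mul_firstPassage E i hβ m,
    ← Finset.mul_sum] at h
  linear_combination h

lemma pagerank_apply_self (hβ : |β| < 1) (η : V → ℝ) :
    pagerank β η E i = (1 - β) * resolvent β E i i * ∑ v, η v * firstPassage β E i v := by
  have h (v : V) : η v * resolvent β E v i = resolvent β E i i * (η v * firstPassage β E i v) := by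
    rw [resolvent_apply_eq_mul_firstPassage E i hβ v]
    ring
  rw [pagerank_apply, Finset.sum_congr rfl fun v _ => h v, ← Finset.mul_sum, mul_assoc]

end FirstPassage

section Locality

lemma le_of_forall_card_eq_sum_le {W : Type*} [DecidableEq W] {s : Finset W} {f : W → ℝ}
    {i k q : W} (h : ∀ b : Finset W, i ∉ b → b.card = s.card → ∑ j ∈ b, f j ≤ ∑ j ∈ s, f j)
    (hi : i ∉ s) (hk : k ∈ s) (hq : q ∉ s) (hqi : q ≠ i) : f q ≤ f k := by
  have hqs : q ∉ s.erase k := fun h => hq (Finset.mem_of_mem_erase h)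
  have hib : i ∉ insert q (s.erase k) := by
    rw [Finset.mem_insert, not_or]
    exact ⟨hqi.symm, fun h => hi (Finset.mem_of_mem_erase h)⟩
  have hcard : (insert q (s.erase k)).card = s.card := by
    rw [Finset.card_insert_of_notMem hqs, Finset.card_erase_add_one hk]
  have := h _ hib hcard
  rw [Finset.sum_insert hqs, Finset.sum_erase_eq_sub hk] at this
  linarith

/-- `T` plays the role of the first-passage generating function to `i`, and the out-links of `i`
go to nodes with the largest values of `T`. -/
structure IsGreedyBestResponse {W : Type*} (β : ℝ) (x : W → Finset W) (i : W) (T : W → ℝ) :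
    Prop where
  pos : ∀ v, 0 < T v
  eq_of_ne : ∀ p, p ≠ i → T p = β * ((x p).card : ℝ)⁻¹ * ∑ m ∈ x p, T m
  le_of_mem : ∀ k ∈ x i, ∀ q ∉ x i, q ≠ i → T q ≤ T k

namespace IsGreedyBestResponse

variable {W : Type*} {β : ℝ} {x : W → Finset W} {i : W} {T : W → ℝ}

/-- `T p` is a `β`-discounted average over `x p`, so some out-neighbour of `p` beats `p`; if it
were not an out-neighbour of `i`, it would have been a better choice for `i` than `p`. -/
lemma exists_mem_lt (h : IsGreedyBestResponse β x i T) (hβ₀ : 0 ≤ β) (hβ₁ : β < 1) {p : W}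
    (hne : (x p).Nonempty) (hp : p ∈ x i) (hip : i ∉ x p) : ∃ m ∈ x p, m ∈ x i ∧ T p < T m := by
  obtain ⟨m, hm, hmax⟩ := Finset.exists_max_image (x p) T hne
  have hpi : p ≠ i := by
    rintro rfl
    exact hip hp
  have hcard : (0 : ℝ) < (x p).card := by exact_mod_cast hne.card_pos
  have hlt : T p < T m :=
    calc T p = β * ((x p).card : ℝ)⁻¹ * ∑ m' ∈ x p, T m' := h.eq_of_ne p hpi
      _ ≤ β * ((x p).card : ℝ)⁻¹ * ((x p).card * T m) := by
          gcongr
          simpa using Finset.sum_le_card_nsmul (x p) T (T m) hmax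
      _ = β * T m := by field_simp
      _ < T m := by nlinarith [h.pos m]
  refine ⟨m, hm, ?_, hlt⟩
  by_contra hmi
  exact (h.le_of_mem p hp m hmi fun hmi' => hip (hmi' ▸ hm)).not_gt hlt

lemma exists_reciprocal (h : IsGreedyBestResponse β x i T) (hβ₀ : 0 ≤ β) (hβ₁ : β < 1)
    (hne : ∀ p, (x p).Nonempty) : ∃ j ∈ x i, i ∈ x j := by
  obtain ⟨j, hj, hmax⟩ := Finset.exists_max_image (x i) T (hne i)
  refine ⟨j, hj, ?_⟩
  by_contra hij
  obtain ⟨m, -, hm, hlt⟩ := h.exists_mem_lt hβ₀ hβ₁ (hne j) hj hij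
  exact (hmax m hm).not_gt hlt

lemma exists_isReturnTriangle [DecidableEq W] (h : IsGreedyBestResponse β x i T)
    (hβ₀ : 0 ≤ β) (hβ₁ : β < 1) (hne : ∀ p, (x p).Nonempty) {p : W} (hp : p ∈ x i)
    (hip : i ∉ x p) : ∃ b c, IsReturnTriangle x i b c := by
  obtain ⟨b, hb, hmax⟩ := Finset.exists_max_image ((x i).filter fun q => i ∉ x q) T
    ⟨p, Finset.mem_filter.mpr ⟨hp, hip⟩⟩
  obtain ⟨hbi, hib⟩ := Finset.mem_filter.mp hb
  obtain ⟨c, hcb, hci, hlt⟩ := h.exists_mem_lt hβ₀ hβ₁ (hne b) hbi hib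
  refine ⟨b, c, hbi, hib, hcb, hci, ?_⟩
  by_contra hic
  exact (hmax c (Finset.mem_filter.mpr ⟨hci, hic⟩)).not_gt hlt

end IsGreedyBestResponse

end Locality

section Equilibrium

variable {β : ℝ}

/-- The centrality of `i` is `(1 - β) K / (1 - β · avg_{j ∈ E i} Tⱼ)` with `K = ∑ᵥ ηᵥ Tᵥ`
independent of the out-links of `i`. -/
lemma sum_firstPassage_le_of_pagerank_update_le (hβ₀ : 0 < β) (hβ₁ : β < 1) (η : V → ℝ)
    (E : V → Finset V) (i : V) (hK : 0 < ∑ v, η v * firstPassage β E i v) {b : Finset V}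
    (hb : b.card = (E i).card) (hE : 0 < (E i).card)
    (h : pagerank β η (update E i b) i ≤ pagerank β η E i) :
    ∑ j ∈ b, firstPassage β E i j ≤ ∑ j ∈ E i, firstPassage β E i j := by
  have hβ : |β| < 1 := by rwa [abs_of_pos hβ₀]
  have hcb := resolvent_self_mul_eq_one (update E i b) i hβ
  have hcE := resolvent_self_mul_eq_one E i hβ
  have hpb := pagerank_apply_self (update E i b) i hβ η
  have hpE := pagerank_apply_self E i hβ η
  rw [update_self, firstPassage_update, hb] at hcb
  rw [firstPassage_update] at hpb
  have hcb₀ : 0 < resolvent β (update E i b) i i := resolvent_apply_pos _ hβ₀ hβ₁ .refl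
  have hcE₀ : 0 < resolvent β E i i := resolvent_apply_pos _ hβ₀ hβ₁ .refl
  have hle : resolvent β (update E i b) i i ≤ resolvent β E i i := by
    rw [hpb, hpE] at h
    have : 0 < 1 - β := by linarith
    exact le_of_mul_le_mul_right (le_of_mul_le_mul_left (by linarith) this) hK
  set ub := 1 - β * ((E i).card : ℝ)⁻¹ * ∑ j ∈ b, firstPassage β E i j
  set uE := 1 - β * ((E i).card : ℝ)⁻¹ * ∑ j ∈ E i, firstPassage β E i j
  have huE : 0 < uE := pos_of_mul_pos_right (hcE.symm ▸ one_pos) hcE₀.le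
  have hu : uE ≤ ub :=
    le_of_mul_le_mul_left (by nlinarith [mul_le_mul_of_nonneg_right hle huE.le]) hcb₀
  have hcoef : 0 < β * ((E i).card : ℝ)⁻¹ := by positivity
  refine le_of_mul_le_mul_left ?_ hcoef
  linarith

lemma _root_.NashEq.isGreedyBestResponse (hβ₀ : 0 < β) (hβ₁ : β < 1) {η : V → ℝ}
    (hη0 : ∀ v, 0 ≤ η v) (hη1 : ∑ v, η v = 1) {d : V → ℕ} (hd : ∀ i, 1 ≤ d i)
    {x : V → Finset V} (hnash : NashEq β η d x) (i : V)
    (hsc : ∀ v, Relation.ReflTransGen (fun a b => b ∈ x a) v i) :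
    IsGreedyBestResponse β x i (firstPassage β x i) := by
  have hβ : |β| < 1 := by rwa [abs_of_pos hβ₀]
  obtain ⟨hval, hbest⟩ := hnash
  have hpos (v : V) : 0 < firstPassage β x i v := firstPassage_pos x i hβ₀ hβ₁ (hsc v)
  have hK : 0 < ∑ v, η v * firstPassage β x i v := by
    obtain ⟨v, -, hv⟩ : ∃ v ∈ Finset.univ, (0 : V → ℝ) v < η v :=
      Finset.exists_lt_of_sum_lt (by simp [hη1])
    exact Finset.sum_pos' (fun v _ => mul_nonneg (hη0 v) (hpos v).le)
      ⟨v, Finset.mem_univ v, mul_pos hv (hpos v)⟩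
  refine ⟨hpos, fun p hp => firstPassage_eq_of_ne x i hβ hp, fun k hk q hq hqi => ?_⟩
  refine le_of_forall_card_eq_sum_le (fun b hib hb => ?_) (hval i).1 hk hq hqi
  exact sum_firstPassage_le_of_pagerank_update_le hβ₀ hβ₁ η x i hK hb
    ((hval i).2 ▸ hd i) (hbest i b hib (hb.trans (hval i).2))

end Equilibrium

end CentralityGame

theorem nash_undirected_links_and_triangles_general
    (β : ℝ) (hβ : β ∈ Set.Ioo (0 : ℝ) 1)
    (η : V → ℝ) (hη0 : ∀ v, 0 ≤ η v) (hη1 : ∑ v, η v = 1)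
    (d : V → ℕ) (hd : ∀ i, 1 ≤ d i ∧ d i ≤ Fintype.card V - 1)
    (x : V → Finset V) (hnash : NashEq β η d x)
    (hsc : ∀ i j : V, Relation.ReflTransGen (fun a b => b ∈ x a) i j)
    (dstar : ℕ) (hds2 : ∀ i, dstar ≤ d i)
    (c2 c3 : ℕ)
    (hc2 : 2 * c2 = (Finset.univ.filter
      (fun p : V × V => p.2 ∈ x p.1 ∧ p.1 ∈ x p.2)).card)
    (hc3 : 3 * c3 = (Finset.univ.filter
      (fun t : V × V × V => t.2.1 ∈ x t.1 ∧ t.2.2 ∈ x t.2.1 ∧ t.1 ∈ x t.2.2 ∧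
        t.1 ≠ t.2.1 ∧ t.2.1 ≠ t.2.2 ∧ t.1 ≠ t.2.2)).card) :
    Fintype.card V ≤ 2 * c2 ∧
    Fintype.card V * dstar ≤ dstar * c3 + 2 * c2 := by
  obtain ⟨hβ₀, hβ₁⟩ := hβ
  have hloop (i : V) : i ∉ x i := (hnash.1 i).1
  have hne (p : V) : (x p).Nonempty := Finset.card_pos.mp ((hnash.1 p).2 ▸ (hd p).1)
  have hgreedy (i : V) := hnash.isGreedyBestResponse hβ₀ hβ₁ hη0 hη1 (fun i => (hd i).1) i
    fun v => hsc v i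
  have hc2' : 2 * c2 = (CentralityGame.reciprocalPairs x).card := hc2
  have hc3' : 3 * c3 = (CentralityGame.threeCycles x).card := hc3
  refine ⟨hc2' ▸ CentralityGame.card_le_card_reciprocalPairs x
    fun i => (hgreedy i).exists_reciprocal hβ₀.le hβ₁ hne, ?_⟩
  have hR : (CentralityGame.returnTriangles x).card ≤ c3 := by
    have := CentralityGame.three_mul_card_returnTriangles_le hloop
    omega
  calc Fintype.card V * dstar
      ≤ dstar * (CentralityGame.returnTriangles x).card + (CentralityGame.reciprocalPairs x).card :=
        CentralityGame.card_mul_le_card_returnTriangles x dstar (fun i => (hnash.1 i).2 ▸ hds2 i)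
          fun i _ hp hip => (hgreedy i).exists_isReturnTriangle hβ₀.le hβ₁ hne hp hip
    _ ≤ dstar * c3 + 2 * c2 := by rw [← hc2']; gcongr

/-- Lower bounds on the number of undirected links (`c₂`, counted as unordered
pairs, so `2c₂` ordered reciprocal pairs) and of 3-cycles (`c₃`, each counted once,
i.e. `3c₃` ordered directed triangles) in a strongly connected Nash equilibrium:
`2c₂ ≥ n` and `d⋆ c₃ + 2c₂ ≥ n d⋆`, where `d⋆` is the minimum out-degree. -/
theorem nash_undirected_links_and_triangles
    (β : ℝ) (hβ : β ∈ Set.Ioo (0 : ℝ) 1)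
    (η : V → ℝ) (hη0 : ∀ v, 0 ≤ η v) (hη1 : ∑ v, η v = 1)
    (d : V → ℕ) (hd : ∀ i, 1 ≤ d i ∧ d i ≤ Fintype.card V - 1)
    (x : V → Finset V) (hnash : NashEq β η d x)
    (hsc : ∀ i j : V, Relation.ReflTransGen (fun a b => b ∈ x a) i j)
    (dstar : ℕ) (hds1 : ∃ i, d i = dstar) (hds2 : ∀ i, dstar ≤ d i)
    (c2 c3 : ℕ)
    (hc2 : 2 * c2 = (Finset.univ.filter
      (fun p : V × V => p.2 ∈ x p.1 ∧ p.1 ∈ x p.2)).card)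
    (hc3 : 3 * c3 = (Finset.univ.filter
      (fun t : V × V × V => t.2.1 ∈ x t.1 ∧ t.2.2 ∈ x t.2.1 ∧ t.1 ∈ x t.2.2 ∧
        t.1 ≠ t.2.1 ∧ t.2.1 ≠ t.2.2 ∧ t.1 ≠ t.2.2)).card) :
    Fintype.card V ≤ 2 * c2 ∧
    Fintype.card V * dstar ≤ dstar * c3 + 2 * c2 :=
  nash_undirected_links_and_triangles_general β hβ η hη0 hη1 d hd x hnash hsc dstar hds2 c2 c3 hc2
    hc3
end
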